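/- arXiv:2301.04635 — 6 statements merged into one kernel-verified Lean document; each statement's English description precedes it below -/
import Mathlib

section
/- For any positive integer n not belonging to O_FS, the cyclic group ℤ/nℤ is not FS-regular: there exist finite multisets A, A' with elements in ℤ/nℤ such that FS(A) = FS(A') but A ∼₀ A' fails. -/
/-- The subset sums multiset: the multiset of sums of all sub-multisets of `A`. -/
def FS {G : Type*} [AddCommGroup G] (A : Multiset G) : Multiset G :=
  A.powerset.map Multiset.sum

/-- `A ∼₀ A'`: `A'` is obtained from `A` by flipping the signs of a zero-sum sub-multiset. -/
def Sim0 {G : Type*} [AddCommGroup G] [DecidableEq G] (A A' : Multiset G) : Prop :=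
  ∃ B ≤ A, B.sum = 0 ∧ A' = (A - B) + B.map (fun x => -x)

/-- `O_FS` : odd naturals `n ≥ 1` such that `(ℤ/nℤ)*` is covered by `{±2^j : j ≥ 0}`. -/
def OFS (n : ℕ) : Prop :=
  Odd n ∧ 1 ≤ n ∧ ∀ x : ℤ, IsCoprime x (n : ℤ) →
    ∃ j : ℕ, (n : ℤ) ∣ x - 2 ^ j ∨ (n : ℤ) ∣ x + 2 ^ j

/-!
For even `n`, the element `a = n/2` has order two, so flipping signs does nothing and `∼₀` is
equality; yet `{0, a, a}` and `{a, a, a}` have the same subset sums, because `FS {a, a}` is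
invariant under translation by `a`.

For odd `n`, let `k = φ(n)`, so that `2^k = q n + 1`. The subset sums of `{1, 2, …, 2^(k-1)}`
are `0, 1, …, 2^k - 1`, i.e. every residue `q` times and `0` once more. This multiset is
invariant under multiplication by any unit `u`, so `{u, 2u, …, 2^(k-1) u}` has the same subset
sums. If `u ≠ ±2^j` for all `j`, then `u` cannot arise by flipping signs in `{1, 2, …, 2^(k-1)}`.
-/

open Multiset

section FS

variable {G H : Type*} [AddCommGroup G] [AddCommGroup H]

@[simp]
lemma FS_zero : FS (0 : Multiset G) = {0} := rfl

lemma FS_cons (a : G) (s : Multiset G) : FS (a ::ₘ s) = FS s + (FS s).map (a + ·) := by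
  simp [FS, powerset_cons, map_map]

lemma FS_map (f : G →+ H) (A : Multiset G) : FS (A.map f) = (FS A).map f := by
  induction A using Multiset.induction_on with
  | empty => simp
  | cons a A ih => simp [FS_cons, ih, map_map]

lemma FS_map_two_pow_range (R : Type*) [Ring R] (k : ℕ) :
    FS ((range k).map ((2 : R) ^ ·)) = (range (2 ^ k)).map Nat.cast := by
  induction k with
  | zero => simp [FS, show range 1 = {0} from rfl]
  | succ k ih =>
    rw [range_succ, map_cons, FS_cons, ih, pow_succ, mul_two, range_add, Multiset.map_add,
      map_map, map_map]
    congr 1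
    refine map_congr rfl fun j _ => ?_
    simp

end FS

section Sim0

variable {G : Type*} [AddCommGroup G] [DecidableEq G] {A A' : Multiset G}

lemma Sim0.mem_or_neg_mem (h : Sim0 A A') {x : G} (hx : x ∈ A') : x ∈ A ∨ -x ∈ A := by
  obtain ⟨B, hBA, -, rfl⟩ := h
  rcases mem_add.mp hx with hx | hx
  · exact .inl (mem_of_le tsub_le_self hx)
  · obtain ⟨b, hb, rfl⟩ := mem_map.mp hx
    exact .inr (by simpa using mem_of_le hBA hb)

lemma Sim0.eq_of_forall_neg_eq (h : Sim0 A A') (hA : ∀ b ∈ A, -b = b) : A' = A := by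
  obtain ⟨B, hBA, -, rfl⟩ := h
  rw [map_congr rfl fun b hb => hA b (mem_of_le hBA hb), map_id', tsub_add_cancel_of_le hBA]

end Sim0

lemma exists_FS_eq_not_sim0_of_add_self_eq_zero {G : Type*} [AddCommGroup G] [DecidableEq G]
    {a : G} (ha0 : a ≠ 0) (ha : a + a = 0) : ∃ A A' : Multiset G, FS A = FS A' ∧ ¬ Sim0 A A' := by
  refine ⟨0 ::ₘ {a, a}, a ::ₘ {a, a}, ?_, fun h => ?_⟩
  · have hFS : (FS {a, a}).map (a + ·) = FS {a, a} := by
      simp [FS_cons, map_map, ← add_assoc, ha, add_comm]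
    rw [FS_cons, FS_cons, hFS]
    simp
  · have := congrArg (count 0) (h.eq_of_forall_neg_eq (by simp [neg_eq_of_add_eq_zero_left ha]))
    simp [ha0.symm] at this

lemma ZMod.exists_ne_zero_add_self_eq_zero {n : ℕ} (hn : Even n) (h0 : n ≠ 0) :
    ∃ a : ZMod n, a ≠ 0 ∧ a + a = 0 := by
  obtain ⟨m, rfl⟩ := hn
  refine ⟨m, fun hm => ?_, by rw [← Nat.cast_add, ZMod.natCast_self]⟩
  have := Nat.le_of_dvd (by omega) ((ZMod.natCast_eq_zero_iff m (m + m)).mp hm)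
  omega

namespace ZMod

variable {n : ℕ} [NeZero n]

lemma map_natCast_range :
    (range n).map (Nat.cast : ℕ → ZMod n) = (Finset.univ : Finset (ZMod n)).val := by
  have hnodup : ((range n).map (Nat.cast : ℕ → ZMod n)).Nodup := by
    refine (nodup_range n).map_on fun i hi j hj hij => ?_
    simpa [natCast_eq_natCast_iff', Nat.mod_eq_of_lt (mem_range.mp hi),
      Nat.mod_eq_of_lt (mem_range.mp hj)] using hij
  exact congrArg Finset.val (Finset.eq_univ_of_card ⟨_, hnodup⟩ (by simp [Finset.card, card]))

lemma map_natCast_range_mul (q : ℕ) :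
    (range (q * n)).map (Nat.cast : ℕ → ZMod n) = q • (Finset.univ : Finset (ZMod n)).val := by
  induction q with
  | zero => simp
  | succ q ih =>
    rw [add_mul, one_mul, range_add, Multiset.map_add, ih, map_map, succ_nsmul]
    congr 1
    simpa [Function.comp_def] using map_natCast_range (n := n)

lemma map_natCast_range_mul_add_one (q : ℕ) :
    (range (q * n + 1)).map (Nat.cast : ℕ → ZMod n) =
      0 ::ₘ q • (Finset.univ : Finset (ZMod n)).val := by
  rw [range_succ, map_cons, map_natCast_range_mul]
  simp

end ZMod

lemma FS_map_unit_mul_two_pow_range {n k q : ℕ} [NeZero n] (hk : 2 ^ k = q * n + 1)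
    (u : (ZMod n)ˣ) :
    FS ((range k).map fun i => (u : ZMod n) * 2 ^ i) = FS ((range k).map ((2 : ZMod n) ^ ·)) := by
  have hmul := FS_map (AddMonoidHom.mulLeft (u : ZMod n)) ((range k).map ((2 : ZMod n) ^ ·))
  simp only [map_map, Function.comp_def, AddMonoidHom.coe_mulLeft] at hmul
  rw [hmul, FS_map_two_pow_range, hk, ZMod.map_natCast_range_mul_add_one, map_cons, map_nsmul,
    mul_zero]
  congr 2
  exact Multiset.map_univ_val_equiv (Units.mulLeft u)

open Nat in
lemma exists_FS_eq_not_sim0_of_unit_ne_two_pow {n : ℕ} [NeZero n] (hn : Odd n) (u : (ZMod n)ˣ)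
    (hu : ∀ j : ℕ, (u : ZMod n) ≠ 2 ^ j ∧ (u : ZMod n) ≠ -2 ^ j) :
    ∃ A A' : Multiset (ZMod n), FS A = FS A' ∧ ¬ Sim0 A A' := by
  obtain ⟨q, hq⟩ : n ∣ 2 ^ φ n - 1 :=
    (Nat.modEq_iff_dvd' Nat.one_le_two_pow).mp (Nat.ModEq.pow_totient hn.coprime_two_left).symm
  have hk : 2 ^ φ n = q * n + 1 := by rw [mul_comm, ← hq, Nat.sub_add_cancel Nat.one_le_two_pow]
  refine ⟨(range (φ n)).map ((2 : ZMod n) ^ ·), (range (φ n)).map fun i => (u : ZMod n) * 2 ^ i,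
    (FS_map_unit_mul_two_pow_range hk u).symm, fun h => ?_⟩
  have hmem : (u : ZMod n) ∈ (range (φ n)).map fun i => (u : ZMod n) * 2 ^ i :=
    mem_map.mpr ⟨0, mem_range.mpr (Nat.totient_pos.mpr (NeZero.pos n)), by simp⟩
  rcases h.mem_or_neg_mem hmem with hA | hA <;> obtain ⟨j, -, hj⟩ := mem_map.mp hA
  · exact (hu j).1 hj.symm
  · exact (hu j).2 (by rw [hj, neg_neg])

lemma exists_unit_ne_two_pow_of_not_OFS {n : ℕ} (hn : Odd n) (h : ¬ OFS n) :
    ∃ u : (ZMod n)ˣ, ∀ j : ℕ, (u : ZMod n) ≠ 2 ^ j ∧ (u : ZMod n) ≠ -2 ^ j := by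
  have h' : ¬ ∀ x : ℤ, IsCoprime x n → ∃ j : ℕ, (n : ℤ) ∣ x - 2 ^ j ∨ (n : ℤ) ∣ x + 2 ^ j :=
    fun hall => h ⟨hn, hn.pos, hall⟩
  push Not at h'
  obtain ⟨x, hx, hxj⟩ := h'
  refine ⟨ZMod.unitOfIsCoprime x hx, fun j => ⟨fun h2 => (hxj j).1 ?_, fun h2 => (hxj j).2 ?_⟩⟩ <;>
    rw [ZMod.coe_unitOfIsCoprime] at h2 <;>
    exact (ZMod.intCast_zmod_eq_zero_iff_dvd _ n).mp (by push_cast; rw [h2]; ring)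

/-- If `n ∉ O_FS` then `ℤ/nℤ` is not `FS`-regular. -/
theorem not_FSRegular_of_not_OFS (n : ℕ) (hn : 0 < n) (h : ¬ OFS n) :
    ∃ A A' : Multiset (ZMod n), FS A = FS A' ∧ ¬ Sim0 A A' := by
  have : NeZero n := ⟨hn.ne'⟩
  rcases Nat.even_or_odd n with heven | hodd
  · obtain ⟨a, ha0, ha⟩ := ZMod.exists_ne_zero_add_self_eq_zero heven hn.ne'
    exact exists_FS_eq_not_sim0_of_add_self_eq_zero ha0 ha
  · obtain ⟨u, hu⟩ := exists_unit_ne_two_pow_of_not_OFS hodd h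
    exact exists_FS_eq_not_sim0_of_unit_ne_two_pow hodd u hu
end

section
/- Let G be an abelian group with no elements of order 2, and let A, A' be finite multisets with elements in G. If FS(A) = FS(A') and A ∼ A', then A ∼₀ A'. -/
/-- `A ∼ A'`: `A'` is obtained from `A` by flipping the signs of a sub-multiset. -/
def Sim {G : Type*} [AddCommGroup G] [DecidableEq G] (A A' : Multiset G) : Prop :=
  ∃ B ≤ A, A' = (A - B) + B.map (fun x => -x)

lemma two_nsmul_FS_sum {G : Type*} [AddCommGroup G] (A : Multiset G) :
    2 • (FS A).sum = 2 ^ Multiset.card A • A.sum := by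
  induction A using Multiset.induction with
  | empty => simp [FS]
  | cons a s ih =>
    have h1 : FS (a ::ₘ s) = FS s + s.powerset.map (fun t => a + t.sum) := by
      simp [FS, Multiset.powerset_cons, Multiset.map_map, Function.comp]
    rw [h1, Multiset.sum_add, Multiset.sum_map_add]
    simp only [Multiset.map_const', Multiset.sum_replicate, Multiset.card_powerset,
      Multiset.card_cons, Multiset.sum_cons]
    have : (s.powerset.map Multiset.sum).sum = (FS s).sum := rfl
    rw [this]
    rw [smul_add, smul_add, smul_smul, smul_add]
    rw [show (2 : ℕ) * 2 ^ Multiset.card s = 2 ^ (Multiset.card s + 1) by ring] at *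
    rw [ih, pow_succ']
    simp only [mul_smul, two_smul]
    abel

lemma no_two_torsion {G : Type*} [AddCommGroup G]
    (hG : ∀ g : G, addOrderOf g ≠ 2) {x : G} (hx : 2 • x = 0) : x = 0 := by
  have hd : addOrderOf x ∣ 2 := addOrderOf_dvd_of_nsmul_eq_zero hx
  rcases (Nat.dvd_prime Nat.prime_two).mp hd with h | h
  · exact AddMonoid.addOrderOf_eq_one_iff.mp h
  · exact absurd h (hG x)

lemma pow_two_smul_cancel {G : Type*} [AddCommGroup G]
    (hG : ∀ g : G, addOrderOf g ≠ 2) {x : G} (n : ℕ) (hx : 2 ^ n • x = 0) : x = 0 := by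
  induction n with
  | zero => simpa using hx
  | succ n ih =>
    apply ih
    apply no_two_torsion hG
    rw [smul_smul, show 2 * 2 ^ n = 2 ^ (n + 1) by ring]
    exact hx

/-- In a group with no elements of order two, `FS A = FS A'` and `A ∼ A'` imply `A ∼₀ A'`. -/
theorem sim0_of_sim_of_FS_eq {G : Type*} [AddCommGroup G] [DecidableEq G]
    (hG : ∀ g : G, addOrderOf g ≠ 2)
    (A A' : Multiset G) (hFS : FS A = FS A') (h : Sim A A') : Sim0 A A' := by
  obtain ⟨B, hBA, hA'⟩ := h
  have hcard : Multiset.card A = Multiset.card A' := by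
    have := congrArg Multiset.card hFS
    simp only [FS, Multiset.card_map, Multiset.card_powerset] at this
    exact Nat.pow_right_injective (le_refl 2) this
  have hsum : A.sum = A'.sum := by
    have h2 : 2 ^ Multiset.card A • A.sum = 2 ^ Multiset.card A • A'.sum := by
      rw [← two_nsmul_FS_sum, hcard, ← two_nsmul_FS_sum, hFS]
    have : 2 ^ Multiset.card A • (A.sum - A'.sum) = 0 := by
      rw [smul_sub, h2, sub_self]
    exact sub_eq_zero.mp (pow_two_smul_cancel hG _ this)
  have hsumB : B.sum = 0 := by
    have hsub : (A - B).sum = A.sum - B.sum := by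
      have h4 : A - B + B = A := tsub_add_cancel_of_le hBA
      have h3 := congrArg Multiset.sum h4
      rw [Multiset.sum_add] at h3
      exact eq_sub_of_add_eq h3
    have hA'sum : A'.sum = A.sum - B.sum - B.sum := by
      rw [hA', Multiset.sum_add, hsub, Multiset.sum_map_neg']
      abel
    have h5 := hsum.trans hA'sum
    have h6 : A.sum - (A.sum - B.sum - B.sum) = 0 := sub_eq_zero.mpr h5
    have h2 : 2 • B.sum = 0 := by
      rw [two_smul, ← h6]; abel
    exact no_two_torsion hG h2
  exact ⟨B, hBA, hsumB, hA'⟩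
end

section
/- If n ∈ O_FS, then every positive divisor of n also belongs to O_FS. -/
theorem Int.exists_isCoprime_modEq_of_dvd {d n : ℕ} [NeZero n] (hdn : d ∣ n) {x : ℤ}
    (hx : IsCoprime x d) : ∃ y : ℤ, IsCoprime y n ∧ y ≡ x [ZMOD d] := by
  have hux : IsUnit (x : ZMod d) := (ZMod.coe_int_isUnit_iff_isCoprime x d).mpr hx.symm
  obtain ⟨v, hv⟩ := ZMod.unitsMap_surjective hdn hux.unit
  refine ⟨(v : ZMod n).cast, ?_, ?_⟩
  · rw [← isCoprime_comm, ← ZMod.coe_int_isUnit_iff_isCoprime, ZMod.intCast_zmod_cast]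
    exact v.isUnit
  · rw [← ZMod.intCast_eq_intCast_iff, ZMod.intCast_cast, ← ZMod.unitsMap_val hdn, hv,
      IsUnit.unit_spec]

/-- `O_FS` is stable under taking positive divisors. -/
theorem OFS_of_dvd (n : ℕ) (hn : OFS n) : ∀ d : ℕ, 0 < d → d ∣ n → OFS d := by
  obtain ⟨hodd, hn1, hcov⟩ := hn
  have : NeZero n := ⟨by omega⟩
  intro d hd hdn
  refine ⟨hodd.of_dvd_nat hdn, hd, fun x hx => ?_⟩
  obtain ⟨y, hy, hyx⟩ := Int.exists_isCoprime_modEq_of_dvd hdn hx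
  have hxy : (d : ℤ) ∣ x - y := hyx.dvd
  have hdn' : (d : ℤ) ∣ n := Int.natCast_dvd_natCast.mpr hdn
  obtain ⟨j, hj | hj⟩ := hcov y hy
  · refine ⟨j, .inl ?_⟩
    rw [show x - 2 ^ j = x - y + (y - 2 ^ j) by ring]
    exact dvd_add hxy (hdn'.trans hj)
  · refine ⟨j, .inr ?_⟩
    rw [show x + 2 ^ j = x - y + (y + 2 ^ j) by ring]
    exact dvd_add hxy (hdn'.trans hj)
end

section
/- An odd positive integer n belongs to O_FS if and only if one of the following holds: (i) the multiplicative order of 2 modulo n equals φ(n); or (ii) the multiplicative order of 2 modulo n equals φ(n)/2 and, in addition, either 4 does not divide φ(n) or 2^{φ(n)/4} is not congruent to −1 modulo n. Here φ denotes Euler's totient function. -/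
/-!
The condition says that `(ZMod n)ˣ` is the union of `H = ⟨2⟩` and its coset `-H`. These cosets
coincide when `-1 ∈ H` and are disjoint otherwise, so counting gives `ord 2 = φ n`, or
`2 * ord 2 = φ n` with `-1 ∉ H`. An element of order two lies in the cyclic group `H` only as
`2 ^ (ord 2 / 2)`, which turns `-1 ∈ H` into `2 ^ (φ n / 4) = -1` when `2 * ord 2 = φ n`.
-/

open Pointwise

theorem ZMod.forall_isCoprime_exists_dvd_sub_or_add_pow_iff (n : ℕ) (a : ℤ) :
    (∀ x : ℤ, IsCoprime x n → ∃ j : ℕ, (n : ℤ) ∣ x - a ^ j ∨ (n : ℤ) ∣ x + a ^ j) ↔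
      ∀ y : (ZMod n)ˣ, ∃ j : ℕ, (y : ZMod n) = a ^ j ∨ (y : ZMod n) = -a ^ j := by
  have hdvd (x : ℤ) (j : ℕ) :
      ((n : ℤ) ∣ x - a ^ j ↔ (x : ZMod n) = a ^ j) ∧
        ((n : ℤ) ∣ x + a ^ j ↔ (x : ZMod n) = -a ^ j) := by
    simp [← ZMod.intCast_zmod_eq_zero_iff_dvd, sub_eq_zero, add_eq_zero_iff_eq_neg]
  have hunit (x : ℤ) : IsCoprime x n ↔ IsUnit (x : ZMod n) := by
    rw [ZMod.coe_int_isUnit_iff_isCoprime, isCoprime_comm]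
  simp only [hdvd, hunit]
  constructor
  · intro h y
    obtain ⟨x, hx⟩ := ZMod.intCast_surjective (y : ZMod n)
    rw [← hx]
    exact h x (hx ▸ y.isUnit)
  · intro h x hx
    simpa using h hx.unit

theorem forall_eq_pow_or_eq_mul_pow_iff {G : Type*} [Group G] [Finite G] (g ε : G) :
    (∀ y : G, ∃ j : ℕ, y = g ^ j ∨ y = ε * g ^ j) ↔
      orderOf g = Nat.card G ∨ (ε ∉ Submonoid.powers g ∧ 2 * orderOf g = Nat.card G) := by
  let H : Set G := Subgroup.zpowers g
  have hmem (y : G) : y ∈ H ∪ ε • H ↔ ∃ j : ℕ, y = g ^ j ∨ y = ε * g ^ j := by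
    simp only [H, Set.mem_union, Set.mem_smul_set_iff_inv_smul_mem, SetLike.mem_coe,
      ← mem_powers_iff_mem_zpowers, Submonoid.mem_powers_iff, smul_eq_mul, eq_inv_mul_iff_mul_eq,
      exists_or, @eq_comm _ y]
  have hH : H.ncard = orderOf g := Nat.card_zpowers g
  simp only [← hmem, ← Set.eq_univ_iff_forall, Set.eq_univ_iff_ncard, mem_powers_iff_mem_zpowers]
  by_cases hε : ε ∈ Subgroup.zpowers g
  · rw [smul_coe_set hε, Set.union_self, hH]
    simp [hε]
  · have hdisj : Disjoint H (ε • H) := by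
      refine Set.disjoint_left.2 fun x hx hεx => hε ?_
      rwa [Set.mem_smul_set_iff_inv_smul_mem, smul_eq_mul, SetLike.mem_coe,
        Subgroup.mul_mem_cancel_right _ hx, inv_mem_iff] at hεx
    rw [Set.ncard_union_eq hdisj, Set.ncard_smul_set, hH]
    simp only [hε, not_false_eq_true, true_and]
    have hlt : H.ncard < Nat.card G :=
      Set.ncard_lt_card fun h => hε (show ε ∈ H from h ▸ Set.mem_univ ε)
    omega

theorem mem_powers_iff_orderOf_eq_two_mul {M : Type*} [Monoid M] {g ε : M} (hε : ε ≠ 1)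
    (hε2 : ε ^ 2 = 1) : ε ∈ Submonoid.powers g ↔ ∃ m, orderOf g = 2 * m ∧ g ^ m = ε := by
  refine ⟨fun ⟨m, hm⟩ => ?_, fun ⟨m, _, hm⟩ => ⟨m, hm⟩⟩
  set r := m % orderOf g
  have hr : g ^ r = ε := (pow_mod_orderOf g m).trans hm
  have hr0 : r ≠ 0 := by
    rintro hr0
    rw [hr0, pow_zero] at hr
    exact hε hr.symm
  have hdvd : orderOf g ∣ 2 * r := orderOf_dvd_of_pow_eq_one (by rw [mul_comm, pow_mul, hr, hε2])
  have hpos : 0 < orderOf g := by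
    refine Nat.pos_of_ne_zero fun h => hr0 ?_
    simpa [r, h] using hdvd
  have hlt : r < orderOf g := Nat.mod_lt m hpos
  exact ⟨r, (Nat.eq_of_dvd_of_lt_two_mul (by omega) hdvd (by omega)).symm, hr⟩

theorem OFS_iff_forall_eq_pow_or_eq_neg_one_mul_pow {n : ℕ} (hodd : Odd n) {u : (ZMod n)ˣ}
    (hu : (u : ZMod n) = 2) : OFS n ↔ ∀ y : (ZMod n)ˣ, ∃ j : ℕ, y = u ^ j ∨ y = -1 * u ^ j := by
  rw [OFS, ZMod.forall_isCoprime_exists_dvd_sub_or_add_pow_iff]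
  simp [hodd, Nat.one_le_iff_ne_zero.2 hodd.pos.ne', Units.ext_iff, hu]

theorem OFS_characterization_general (n : ℕ) (hodd : Odd n) :
    OFS n ↔
      orderOf (2 : ZMod n) = Nat.totient n ∨
      (orderOf (2 : ZMod n) = Nat.totient n / 2 ∧
        (¬ (4 ∣ Nat.totient n) ∨ (2 : ZMod n) ^ (Nat.totient n / 4) ≠ -1)) := by
  obtain rfl | hn : n = 1 ∨ 2 < n := by obtain ⟨c, rfl⟩ := hodd; omega
  · simp [OFS, Subsingleton.elim (2 : ZMod 1) 1]
  have : Fact (2 < n) := ⟨hn⟩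
  have : NeZero n := ⟨by omega⟩
  set u := ZMod.unitOfCoprime 2 (Nat.coprime_two_left.2 hodd)
  have hu : (u : ZMod n) = 2 := by simp [u]
  have hcard : Nat.card (ZMod n)ˣ = n.totient := by
    rw [Nat.card_eq_fintype_card, ZMod.card_units_eq_totient]
  have hε : (-1 : (ZMod n)ˣ) ≠ 1 := fun h =>
    ZMod.neg_one_ne_one (by simpa using congrArg Units.val h)
  rw [OFS_iff_forall_eq_pow_or_eq_neg_one_mul_pow hodd hu, forall_eq_pow_or_eq_mul_pow_iff,
    mem_powers_iff_orderOf_eq_two_mul hε (by simp), hcard, ← orderOf_units, hu]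
  refine or_congr_right ?_
  have hpow (m : ℕ) : u ^ m = -1 ↔ (2 : ZMod n) ^ m = -1 := by simp [Units.ext_iff, hu]
  obtain ⟨t, ht⟩ := Nat.totient_even hn
  rw [and_comm, show 2 * orderOf (2 : ZMod n) = n.totient ↔
    orderOf (2 : ZMod n) = n.totient / 2 by omega]
  refine and_congr_right fun hk => ?_
  simp only [hpow, ne_eq, ← not_and_or, not_iff_not]
  constructor
  · rintro ⟨m, hkm, hm⟩
    exact ⟨⟨m, by omega⟩, by rwa [show n.totient / 4 = m by omega]⟩
  · rintro ⟨⟨m, hm⟩, h⟩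
    exact ⟨m, by omega, by rwa [show n.totient / 4 = m by omega] at h⟩

/-- Characterization of membership in `O_FS` via the multiplicative order of `2` modulo `n`. -/
theorem OFS_characterization (n : ℕ) (hpos : 0 < n) (hodd : Odd n) :
    OFS n ↔
      orderOf (2 : ZMod n) = Nat.totient n ∨
      (orderOf (2 : ZMod n) = Nat.totient n / 2 ∧
        (¬ (4 ∣ Nat.totient n) ∨ (2 : ZMod n) ^ (Nat.totient n / 4) ≠ -1)) :=
  OFS_characterization_general n hodd
end

section
/- If n ∈ O_FS, then n has at most two distinct prime factors. -/
theorem pow_eq_one_or_eq_pow_orderOf_div_two {M : Type*} [Monoid M] {g : M} {j : ℕ}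
    (h : (g ^ j) ^ 2 = 1) : g ^ j = 1 ∨ g ^ j = g ^ (orderOf g / 2) := by
  rw [← pow_mod_orderOf g j] at h ⊢
  obtain ⟨k, hk⟩ : orderOf g ∣ 2 * (j % orderOf g) :=
    orderOf_dvd_of_pow_eq_one (by rwa [mul_comm, pow_mul])
  rcases (orderOf g).eq_zero_or_pos with hzero | hpos
  · left
    rw [hzero] at hk ⊢
    rw [show j % 0 = 0 by omega, pow_zero]
  · have hk2 : k < 2 := by nlinarith [Nat.mod_lt j hpos]
    interval_cases k
    · left
      rw [show j % orderOf g = 0 by omega, pow_zero]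
    · right
      rw [show j % orderOf g = orderOf g / 2 by omega]

theorem card_mul_self_eq_one_le_four {M : Type*} [Monoid M] [HasDistribNeg M] (g : M)
    (h : ∀ x : M, x * x = 1 → ∃ j : ℕ, x = g ^ j ∨ x = -g ^ j) :
    Nat.card {x : M // x * x = 1} ≤ 4 := by
  classical
  set t := g ^ (orderOf g / 2) with ht_def
  have hsub : {x : M | x * x = 1} ⊆ (({1, -1, t, -t} : Finset M) : Set M) := by
    intro x hx
    obtain ⟨j, rfl | rfl⟩ := h x hx <;>
    · have hsq : (g ^ j) ^ 2 = 1 := by simpa [sq] using hx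
      rcases pow_eq_one_or_eq_pow_orderOf_div_two hsq with hj | hj <;> simp [hj, ← ht_def]
  calc Nat.card {x : M // x * x = 1} = Set.ncard {x : M | x * x = 1} := Nat.card_coe_set_eq _
    _ ≤ (({1, -1, t, -t} : Finset M) : Set M).ncard := Set.ncard_le_ncard hsub
    _ ≤ 4 := by rw [Set.ncard_coe_finset]; exact Finset.card_le_four

theorem card_mul_self_eq_one_congr {M N : Type*} [MulOneClass M] [MulOneClass N] (e : M ≃* N) :
    Nat.card {x : M // x * x = 1} = Nat.card {y : N // y * y = 1} :=
  Nat.card_congr <| e.toEquiv.subtypeEquiv fun x => by simp [← map_mul]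

theorem card_mul_self_eq_one_prod {M N : Type*} [MulOneClass M] [MulOneClass N] :
    Nat.card {x : M × N // x * x = 1} =
      Nat.card {x : M // x * x = 1} * Nat.card {y : N // y * y = 1} := by
  rw [← Nat.card_prod]
  exact Nat.card_congr <|
    (Equiv.subtypeEquivRight (q := fun x : M × N => x.1 * x.1 = 1 ∧ x.2 * x.2 = 1)
      fun _ => Prod.ext_iff).trans
      (Equiv.subtypeProdEquivProd (p := fun a : M => a * a = 1) (q := fun b : N => b * b = 1))

theorem two_le_card_mul_self_eq_one {M : Type*} [Monoid M] [HasDistribNeg M] [Finite M]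
    (h : (-1 : M) ≠ 1) : 2 ≤ Nat.card {x : M // x * x = 1} :=
  have : Nontrivial {x : M // x * x = 1} :=
    ⟨⟨⟨-1, by simp⟩, ⟨1, one_mul 1⟩, fun he => h (congrArg Subtype.val he)⟩⟩
  Finite.one_lt_card_iff_nontrivial.mpr this

theorem two_pow_card_primeFactors_le_card_mul_self_eq_one {n : ℕ} (hn : Odd n) :
    2 ^ n.primeFactors.card ≤ Nat.card {x : ZMod n // x * x = 1} := by
  induction n using Nat.recOnPosPrimePosCoprime with
  | prime_pow p k hp hk =>
    have hp2 : p ≠ 2 := by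
      rintro rfl
      exact absurd (hn.of_dvd_nat (dvd_pow_self 2 hk.ne')) (by decide)
    have : NeZero (p ^ k) := ⟨pow_ne_zero k hp.ne_zero⟩
    have : Fact (2 < p ^ k) :=
      ⟨(hp.two_le.lt_of_ne' hp2).trans_le (Nat.le_self_pow hk.ne' p)⟩
    rw [Nat.primeFactors_prime_pow hk.ne' hp, Finset.card_singleton, pow_one]
    exact two_le_card_mul_self_eq_one ZMod.neg_one_ne_one
  | zero => exact absurd hn (by decide)
  | one => simp
  | coprime a b _ _ hab iha ihb =>
    rw [hab.primeFactors_mul, Finset.card_union_of_disjoint hab.disjoint_primeFactors, pow_add,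
      card_mul_self_eq_one_congr (ZMod.chineseRemainder hab).toMulEquiv,
      card_mul_self_eq_one_prod]
    obtain ⟨ha, hb⟩ := Nat.odd_mul.mp hn
    exact Nat.mul_le_mul (iha ha) (ihb hb)

theorem OFS.exists_eq_two_pow_or_eq_neg_two_pow {n : ℕ} (hn : OFS n) {x : ZMod n}
    (hx : IsUnit x) : ∃ j : ℕ, x = 2 ^ j ∨ x = -2 ^ j := by
  have : NeZero n := ⟨hn.1.pos.ne'⟩
  have hcop : IsCoprime (x.val : ℤ) n :=
    Nat.isCoprime_iff_coprime.mpr (by simpa using ZMod.val_coe_unit_coprime hx.unit)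
  obtain ⟨j, hj⟩ := hn.2.2 _ hcop
  refine ⟨j, hj.imp (fun hsub => ?_) (fun hadd => ?_)⟩
  · have hzero := (ZMod.intCast_zmod_eq_zero_iff_dvd _ n).mpr hsub
    push_cast [ZMod.natCast_zmod_val] at hzero
    exact sub_eq_zero.mp hzero
  · have hzero := (ZMod.intCast_zmod_eq_zero_iff_dvd _ n).mpr hadd
    push_cast [ZMod.natCast_zmod_val] at hzero
    exact eq_neg_of_add_eq_zero_left hzero

/-- Every element of `O_FS` has at most two distinct prime factors. -/
theorem OFS_at_most_two_primes (n : ℕ) (hn : OFS n) : n.primeFactors.card ≤ 2 := by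
  have hsqrt : ∀ x : ZMod n, x * x = 1 → ∃ j : ℕ, x = 2 ^ j ∨ x = -2 ^ j :=
    fun x hx => hn.exists_eq_two_pow_or_eq_neg_two_pow (.of_mul_eq_one x hx)
  have hcard : 2 ^ n.primeFactors.card ≤ 2 ^ 2 :=
    (two_pow_card_primeFactors_le_card_mul_self_eq_one hn.1).trans
      (card_mul_self_eq_one_le_four 2 hsqrt)
  exact (Nat.pow_le_pow_iff_right one_lt_two).mp hcard
end

section
/- Let F be a field, V an F-vector space, and v_1, …, v_k ∈ V. Let λ ∈ F be such that λ^q ≠ 1 for every positive integer q ≥ 1, and let σ : {1, …, k} → {1, …, k} be any function. Then the F-linear span of the vectors v_j − λ·v_{σ(j)}, for 1 ≤ j ≤ k, equals the F-linear span of v_1, …, v_k. -/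
/-- If `λ^q ≠ 1` for all `q ≥ 1`, then the span of the vectors `v_j - λ • v_{σ(j)}`
coincides with the span of the vectors `v_j`. -/
theorem span_sub_smul_eq_span {F : Type*} [Field F] {V : Type*} [AddCommGroup V] [Module F V]
    (k : ℕ) (v : Fin k → V) (lam : F) (hlam : ∀ q : ℕ, 1 ≤ q → lam ^ q ≠ 1)
    (σ : Fin k → Fin k) :
    Submodule.span F (Set.range fun j => v j - lam • v (σ j)) =
      Submodule.span F (Set.range v) := by
  set W := Submodule.span F (Set.range fun j => v j - lam • v (σ j)) with hW
  apply le_antisymm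
  · rw [Submodule.span_le]
    rintro _ ⟨j, rfl⟩
    exact sub_mem (Submodule.subset_span ⟨j, rfl⟩)
      (Submodule.smul_mem _ _ (Submodule.subset_span ⟨σ j, rfl⟩))
  · suffices hall : ∀ j : Fin k, v j ∈ W by
      rw [Submodule.span_le]; rintro _ ⟨j, rfl⟩; exact hall j
    have h1 : ∀ j : Fin k, v j - lam • v (σ j) ∈ W :=
      fun j => Submodule.subset_span ⟨j, rfl⟩
    have h2 : ∀ j : Fin k, v (σ j) ∈ W → v j ∈ W := by
      intro j hj
      have : v j = (v j - lam • v (σ j)) + lam • v (σ j) := by abel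
      rw [this]
      exact add_mem (h1 j) (Submodule.smul_mem _ _ hj)
    have h3 : ∀ (n : ℕ) (j : Fin k), v j - lam ^ n • v (σ^[n] j) ∈ W := by
      intro n
      induction n with
      | zero => intro j; simp
      | succ n ih =>
          intro j
          have key : v j - lam ^ (n+1) • v (σ^[n+1] j) =
              (v j - lam ^ n • v (σ^[n] j)) +
                lam ^ n • (v (σ^[n] j) - lam • v (σ (σ^[n] j))) := by
            rw [Function.iterate_succ_apply', smul_sub, smul_smul, ← pow_succ]
            abel
          rw [key]
          exact add_mem (ih j) (Submodule.smul_mem _ _ (h1 _))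
    have h4 : ∀ j : Fin k, ∃ m p : ℕ, 1 ≤ p ∧ σ^[m] j = σ^[m + p] j := by
      intro j
      haveI : Nonempty (Fin k) := ⟨j⟩
      obtain ⟨a, b, hne, heq⟩ :=
        Finite.exists_ne_map_eq_of_infinite (fun n : ℕ => σ^[n] j)
      rcases hne.lt_or_gt with h | h
      · exact ⟨a, b - a, by omega, by rw [heq]; congr 1; omega⟩
      · exact ⟨b, a - b, by omega, by rw [← heq]; congr 1; omega⟩
    have h5 : ∀ (m : ℕ) (j : Fin k), v (σ^[m] j) ∈ W → v j ∈ W := by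
      intro m
      induction m with
      | zero => intro j hj; exact hj
      | succ m ih =>
          intro j hj
          rw [Function.iterate_succ_apply] at hj
          exact h2 j (ih (σ j) hj)
    intro j
    obtain ⟨m, p, hp, heq⟩ := h4 j
    apply h5 m
    have := h3 p (σ^[m] j)
    rw [← Function.iterate_add_apply, add_comm p m, ← heq] at this
    have hmem : (1 - lam ^ p) • v (σ^[m] j) ∈ W := by
      rwa [sub_smul, one_smul]
    have hne : (1 - lam ^ p) ≠ 0 := sub_ne_zero.mpr (Ne.symm (hlam p hp))
    have := Submodule.smul_mem W (1 - lam ^ p)⁻¹ hmem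
    rwa [smul_smul, inv_mul_cancel₀ hne, one_smul] at this
end
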